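/- arXiv:2404.02771 — 2 statements merged into one kernel-verified Lean document; each statement's English description precedes it below -/
import Mathlib

section
/- Fix Δ ∈ (0, 1] and φ ∈ (0, π/3]. There exist constants c > 0 and ε₀ > 0 such that for every a ∈ ℝ², every unit vector d ∈ ℝ², and every ε ∈ (0, ε₀], the number of ε-granular states of size 4 satisfies |A^4(ε)| ≥ c · φ · Δ³ / ε³. -/
open Real Set

noncomputable def toCCW (θ : ℝ) : ℝ := if 0 ≤ θ then θ else θ + 2 * Real.pi

noncomputable def ccwAngle (w z : ℂ) : ℝ := toCCW ((z / w).arg)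

noncomputable def dhull (a d : ℂ) (φ Δ : ℝ) : Set ℂ :=
  {a} ∪ {x : ℂ | dist x a ≤ Δ ∧ ccwAngle d (x - a) ∈ Set.Ico 0 φ}

noncomputable def dlocs (a d : ℂ) (φ Δ ε : ℝ) : Set ℂ :=
  ({a} ∪ {x : ℂ | ∃ i j : ℕ,
      x = a + ((1 + 2 * (i : ℝ)) * ε) • d + (2 * (j : ℝ) * ε) • (Complex.I * d)})
    ∩ dhull a d φ Δ

noncomputable def dtriples (a d : ℂ) (Δ ε : ℝ) : Set (Set ℂ) :=
  {T : Set ℂ | ∃ i : ℕ, 1 ≤ i ∧ (1 + 2 * (i : ℝ)) * ε ≤ Δ ∧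
    T = {a, a + ε • d, a + ((1 + 2 * (i : ℝ)) * ε) • d}}

noncomputable def dstates (a d : ℂ) (φ Δ ε : ℝ) : Set (Set ℂ) :=
  {U : Set ℂ | ∃ S ⊆ dlocs a d φ Δ ε, ∃ T ∈ dtriples a d Δ ε, U = S ∪ T}

noncomputable def dstatesOfSize (a d : ℂ) (φ Δ ε : ℝ) (ℓ : ℕ) : Set (Set ℂ) :=
  {U ∈ dstates a d φ Δ ε | U.ncard = ℓ}

/-! In the frame `z ↦ a + z * d`, each index `(i, k, j)` with `1 ≤ i ≤ n`, `n ≤ k ≤ 2n`,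
`1 ≤ j ≤ J` gives the four points `0`, `ε`, `(1 + 2i)ε` (a defining triple) and the grid point
`(1 + 2k)ε + 2jε·I`. Since `k ≥ n`, the grid point has slope `2j / (1 + 2k) < φ`, hence argument
`< φ`, and it lies within distance `(1 + 4n + 2J)ε ≤ Δ`; so every index gives a state of size 4.
The off-axis point and the far axis point can be read back from the state, so distinct indices
give distinct states. Taking `n ≈ Δ / (8ε)` and `J ≈ φn / 2` yields `n(n + 1)J ≳ φΔ³/ε³` states. -/

lemma half_le_natFloor {x : ℝ} (hx : 1 ≤ x) : x / 2 ≤ ⌊x⌋₊ := by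
  have h1 : (1 : ℝ) ≤ ⌊x⌋₊ := by exact_mod_cast (Nat.one_le_floor_iff x).2 hx
  linarith [Nat.lt_floor_add_one x]

namespace Complex

lemma arg_le_im_div_re {z : ℂ} (hre : 0 < z.re) (him : 0 ≤ z.im) : z.arg ≤ z.im / z.re :=
  (le_tan (arg_nonneg_iff.2 him) (arg_lt_pi_div_two_iff.2 (Or.inl hre))).trans_eq (tan_arg z)

end Complex

open Complex

lemma add_smul_add_smul_I_mul (a d : ℂ) (r s : ℝ) :
    a + r • d + s • (I * d) = a + ⟨r, s⟩ * d := by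
  rw [← re_add_im ⟨r, s⟩]
  simp only [real_smul]
  ring

lemma add_mul_left_injective₀ (a : ℂ) {d : ℂ} (hd : d ≠ 0) : Function.Injective (a + · * d) :=
  fun _ _ h ↦ mul_right_cancel₀ hd (add_left_cancel h)

lemma ccwAngle_mul_self {d : ℂ} (hd : d ≠ 0) (z : ℂ) : ccwAngle d (z * d) = toCCW z.arg := by
  rw [ccwAngle, mul_div_cancel_right₀ z hd]

lemma add_mul_mem_dhull {a d z : ℂ} {φ Δ : ℝ} (hd : ‖d‖ = 1) (hre : 0 < z.re) (him : 0 ≤ z.im)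
    (hφ : z.im < φ * z.re) (hΔ : ‖z‖ ≤ Δ) : a + z * d ∈ dhull a d φ Δ := by
  have hd0 : d ≠ 0 := norm_ne_zero_iff.1 (hd ▸ one_ne_zero)
  have harg : 0 ≤ z.arg := arg_nonneg_iff.2 him
  refine Or.inr ⟨by simpa [dist_eq_norm, hd] using hΔ, ?_⟩
  rw [add_sub_cancel_left, ccwAngle_mul_self hd0, toCCW, if_pos harg]
  exact ⟨harg, (arg_le_im_div_re hre him).trans_lt ((div_lt_iff₀ hre).2 hφ)⟩

section Finiteness

variable {a d : ℂ} {φ Δ ε : ℝ}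

lemma dlocs_finite (hd : ‖d‖ = 1) (hε : 0 < ε) : (dlocs a d φ Δ ε).Finite := by
  set N := ⌊Δ / ε⌋₊
  refine ((finite_singleton a).union (((finite_Iic N).prod (finite_Iic N)).image
    fun p : ℕ × ℕ ↦ a + ⟨(1 + 2 * p.1) * ε, 2 * p.2 * ε⟩ * d)).subset ?_
  rintro x ⟨rfl | ⟨i, j, rfl⟩, hx⟩
  · exact Or.inl rfl
  rcases hx with hx | ⟨hdist, -⟩
  · exact Or.inl hx
  rw [add_smul_add_smul_I_mul, dist_eq_norm, add_sub_cancel_left, norm_mul, hd, mul_one] at hdist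
  have hre : (1 + 2 * i) * ε ≤ Δ := (re_le_norm _).trans hdist
  have him : 2 * j * ε ≤ Δ := (im_le_norm _).trans hdist
  refine Or.inr ⟨(i, j), ⟨Nat.le_floor ((le_div_iff₀ hε).2 ?_),
    Nat.le_floor ((le_div_iff₀ hε).2 ?_)⟩, (add_smul_add_smul_I_mul _ _ _ _).symm⟩
  · nlinarith
  · nlinarith

lemma dtriples_finite (hε : 0 < ε) : (dtriples a d Δ ε).Finite := by
  refine ((finite_Iic ⌊Δ / ε⌋₊).image
    fun i : ℕ ↦ ({a, a + ε • d, a + ((1 + 2 * (i : ℝ)) * ε) • d} : Set ℂ)).subset ?_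
  rintro T ⟨i, -, hi, rfl⟩
  exact ⟨i, Nat.le_floor ((le_div_iff₀ hε).2 (by nlinarith)), rfl⟩

lemma dstates_finite (hd : ‖d‖ = 1) (hε : 0 < ε) : (dstates a d φ Δ ε).Finite := by
  refine (((dlocs_finite (a := a) (φ := φ) (Δ := Δ) hd hε).finite_subsets.image2 (· ∪ ·)
    (dtriples_finite (a := a) (d := d) (Δ := Δ) hε))).subset ?_
  rintro U ⟨S, hS, T, hT, rfl⟩
  exact ⟨S, hS, T, hT, rfl⟩

end Finiteness

lemma one_add_two_mul_natCast_ne_zero (n : ℕ) : (1 : ℝ) + 2 * n ≠ 0 := by positivity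

-- The state with index `(i, k, j)`, in coordinates of the frame `z ↦ a + z * d`.
def coordState (ε : ℝ) (t : ℕ × ℕ × ℕ) : Set ℂ :=
  {⟨(1 + 2 * t.2.1) * ε, 2 * t.2.2 * ε⟩, 0, (ε : ℂ), (((1 + 2 * t.1) * ε : ℝ) : ℂ)}

section CoordState

variable {ε : ℝ} (hε : 0 < ε)
include hε

lemma ncard_coordState {t : ℕ × ℕ × ℕ} (hi : 1 ≤ t.1) (hj : 1 ≤ t.2.2) :
    (coordState ε t).ncard = 4 := by
  refine ncard_eq_four.2 ⟨_, _, _, _, ?_, ?_, ?_, ?_, ?_, ?_, rfl⟩ <;>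
    simp [Complex.ext_iff, hε.ne, hε.ne', one_add_two_mul_natCast_ne_zero] <;> omega

lemma injOn_coordState : InjOn (coordState ε) {t | 1 ≤ t.1 ∧ 1 ≤ t.2.2} := by
  rintro ⟨i, k, j⟩ ⟨hi, hj⟩ ⟨i', k', j'⟩ ⟨hi', hj'⟩ h
  have hw : (⟨(1 + 2 * k) * ε, 2 * j * ε⟩ : ℂ) ∈ coordState ε (i', k', j') := by
    rw [← h]; simp [coordState]
  have hx : (((1 + 2 * i) * ε : ℝ) : ℂ) ∈ coordState ε (i', k', j') := by
    rw [← h]; simp [coordState]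
  simp [coordState, Complex.ext_iff, hε.ne', one_add_two_mul_natCast_ne_zero] at hw hx hi hj hi' hj'
  simp only [Prod.mk.injEq]
  omega

end CoordState

section Counting

variable {a d : ℂ} {φ Δ ε : ℝ}

lemma image_coordState (a d : ℂ) (ε : ℝ) (t : ℕ × ℕ × ℕ) :
    (a + · * d) '' coordState ε t =
      {a + ((1 + 2 * (t.2.1 : ℝ)) * ε) • d + (2 * (t.2.2 : ℝ) * ε) • (I * d)} ∪
        {a, a + ε • d, a + ((1 + 2 * (t.1 : ℝ)) * ε) • d} := by
  rw [add_smul_add_smul_I_mul, singleton_union]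
  simp [coordState, image_insert_eq, real_smul]

lemma image_coordState_mem_dstatesOfSize (hd : ‖d‖ = 1) (hε : 0 < ε) {i k j : ℕ} (hi : 1 ≤ i)
    (hiΔ : (1 + 2 * i) * ε ≤ Δ) (hj : 1 ≤ j) (hφ : 2 * j < φ * (1 + 2 * k))
    (hΔ : (1 + 2 * k + 2 * j) * ε ≤ Δ) :
    (a + · * d) '' coordState ε (i, k, j) ∈ dstatesOfSize a d φ Δ ε 4 := by
  have hd0 : d ≠ 0 := norm_ne_zero_iff.1 (hd ▸ one_ne_zero)
  refine ⟨⟨_, ?_, _, ⟨i, hi, hiΔ, rfl⟩, image_coordState a d ε (i, k, j)⟩, ?_⟩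
  · set z : ℂ := ⟨(1 + 2 * k) * ε, 2 * j * ε⟩
    have hnorm : ‖z‖ ≤ (1 + 2 * k + 2 * j) * ε := by
      refine (norm_le_abs_re_add_abs_im z).trans_eq ?_
      simp only [z, abs_of_pos (by positivity : (0 : ℝ) < (1 + 2 * k) * ε),
        abs_of_nonneg (by positivity : (0 : ℝ) ≤ 2 * j * ε)]
      ring
    refine singleton_subset_iff.2 ⟨Or.inr ⟨k, j, rfl⟩, ?_⟩
    rw [add_smul_add_smul_I_mul]
    exact add_mul_mem_dhull hd (by positivity) (by positivity)
      (by simpa only [z, mul_assoc] using mul_lt_mul_of_pos_right hφ hε) (hnorm.trans hΔ)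
  · rw [ncard_image_of_injective _ (add_mul_left_injective₀ a hd0), ncard_coordState hε hi hj]

lemma card_le_ncard_dstatesOfSize_four (hd : ‖d‖ = 1) (hε : 0 < ε) {n J : ℕ}
    (hφ : 2 * J < φ * (1 + 2 * n)) (hΔ : (1 + 4 * n + 2 * J) * ε ≤ Δ) :
    n * (n + 1) * J ≤ (dstatesOfSize a d φ Δ ε 4).ncard := by
  have hd0 : d ≠ 0 := norm_ne_zero_iff.1 (hd ▸ one_ne_zero)
  set Idx := Finset.Icc 1 n ×ˢ Finset.Icc n (2 * n) ×ˢ Finset.Icc 1 J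
  have hcard : Idx.card = n * (n + 1) * J := by
    simp only [Idx, Finset.card_product, Nat.card_Icc]
    rw [show 2 * n + 1 - n = n + 1 by omega, Nat.add_sub_cancel, Nat.add_sub_cancel, mul_assoc]
  have hφ0 : 0 ≤ φ := by
    by_contra! h
    nlinarith [(Nat.cast_nonneg J : (0 : ℝ) ≤ J), (Nat.cast_nonneg n : (0 : ℝ) ≤ n)]
  have hmaps : ∀ t ∈ (Idx : Set (ℕ × ℕ × ℕ)),
      (a + · * d) '' coordState ε t ∈ dstatesOfSize a d φ Δ ε 4 := by
    rintro ⟨i, k, j⟩ ht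
    simp only [Idx, Finset.coe_product, mem_prod, Finset.coe_Icc, mem_Icc] at ht
    obtain ⟨⟨hi1, hin⟩, ⟨hnk, hk2n⟩, ⟨hj1, hjJ⟩⟩ := ht
    have hin' : (i : ℝ) ≤ n := by exact_mod_cast hin
    have hnk' : (n : ℝ) ≤ k := by exact_mod_cast hnk
    have hk2n' : (k : ℝ) ≤ 2 * n := by exact_mod_cast hk2n
    have hjJ' : (j : ℝ) ≤ J := by exact_mod_cast hjJ
    refine image_coordState_mem_dstatesOfSize hd hε hi1 ?_ hj1 ?_ ?_
    · nlinarith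
    · nlinarith
    · nlinarith
  have hinj : InjOn (fun t ↦ (a + · * d) '' coordState ε t) Idx := by
    refine ((image_injective.2 (add_mul_left_injective₀ a hd0)).comp_injOn
      (injOn_coordState hε)).mono ?_
    rintro ⟨i, k, j⟩ ht
    simp only [Idx, Finset.coe_product, mem_prod, Finset.coe_Icc, mem_Icc] at ht
    exact ⟨ht.1.1, ht.2.2.1⟩
  calc n * (n + 1) * J = ((fun t ↦ (a + · * d) '' coordState ε t) '' Idx).ncard := by
        rw [hinj.ncard_image, ncard_coe_finset, hcard]
    _ ≤ (dstatesOfSize a d φ Δ ε 4).ncard :=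
        ncard_le_ncard (image_subset_iff.2 hmaps) ((dstates_finite hd hε).subset fun _ h ↦ h.1)

end Counting

lemma exists_index_box {φ Δ ε : ℝ} (hφ0 : 0 < φ) (hφ2 : φ ≤ 2) (hε : 0 < ε)
    (hεφΔ : ε ≤ φ * Δ / 32) :
    ∃ n J : ℕ, 2 * J < φ * (1 + 2 * n) ∧ (1 + 4 * n + 2 * J) * ε ≤ Δ ∧
      φ / 4 * (Δ / (16 * ε)) ^ 3 ≤ n * (n + 1) * J := by
  have hΔ0 : 0 < Δ := by nlinarith
  set n := ⌊Δ / (8 * ε)⌋₊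
  set J := ⌊φ * n / 2⌋₊
  have hn : Δ / (16 * ε) ≤ n := calc
    Δ / (16 * ε) = Δ / (8 * ε) / 2 := by field_simp; ring
    _ ≤ n := half_le_natFloor ((le_div_iff₀ (by positivity)).2 (by nlinarith))
  have hnΔ : n * ε ≤ Δ / 8 := by
    have := (le_div_iff₀ (by positivity)).1 (Nat.floor_le (by positivity : 0 ≤ Δ / (8 * ε)))
    linarith
  have hJ : φ * n / 4 ≤ J := calc
    φ * n / 4 = φ * n / 2 / 2 := by ring
    _ ≤ J := by
      refine half_le_natFloor ?_
      have : 2 ≤ φ * (Δ / (16 * ε)) := by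
        rw [mul_div_assoc', le_div_iff₀ (by positivity)]; linarith
      nlinarith
  have hJφ : (J : ℝ) ≤ φ * n / 2 := Nat.floor_le (by positivity)
  have hJn : (J : ℝ) ≤ n := by nlinarith [(Nat.cast_nonneg n : (0 : ℝ) ≤ n)]
  have hJε : J * ε ≤ n * ε := mul_le_mul_of_nonneg_right hJn hε.le
  have hεΔ : ε ≤ Δ / 16 := by nlinarith
  refine ⟨n, J, by linarith, by linarith, ?_⟩
  calc φ / 4 * (Δ / (16 * ε)) ^ 3 ≤ φ / 4 * n ^ 3 := by gcongr
    _ = n * n * (φ * n / 4) := by ring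
    _ ≤ n * (n + 1) * J := by gcongr; linarith

/-- For fixed `Δ ∈ (0,1]` and `φ ∈ (0, π/3]`, there are constants
`c > 0` and `ε₀ > 0` such that for every anchor, unit direction and `ε ∈ (0, ε₀]`,
the number of `ε`-granular states of size `4` is at least `c · φ · Δ³ / ε³`. -/
theorem card_states_four_lower_bound (Δ φ : ℝ)
    (hΔ : Δ ∈ Set.Ioc (0 : ℝ) 1) (hφ : φ ∈ Set.Ioc 0 (π / 3)) :
    ∃ c > (0 : ℝ), ∃ ε₀ > (0 : ℝ), ∀ a d : ℂ, ‖d‖ = 1 → ∀ ε : ℝ, 0 < ε → ε ≤ ε₀ →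
      c * φ * Δ ^ 3 / ε ^ 3 ≤ ((dstatesOfSize a d φ Δ ε 4).ncard : ℝ) := by
  obtain ⟨hΔ0, -⟩ := hΔ
  obtain ⟨hφ0, hφπ⟩ := hφ
  have hφ2 : φ ≤ 2 := by linarith [pi_le_four]
  refine ⟨1 / 16384, by norm_num, φ * Δ / 32, by positivity, fun a d hd ε hε hεε₀ ↦ ?_⟩
  obtain ⟨n, J, hJφ, hΔnJ, hbound⟩ := exists_index_box hφ0 hφ2 hε hεε₀
  calc 1 / 16384 * φ * Δ ^ 3 / ε ^ 3 = φ / 4 * (Δ / (16 * ε)) ^ 3 := by field_simp; ring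
    _ ≤ (n : ℝ) * (n + 1) * J := hbound
    _ ≤ ((dstatesOfSize a d φ Δ ε 4).ncard : ℝ) := by
      exact_mod_cast card_le_ncard_dstatesOfSize_four hd hε hJφ hΔnJ
end

section
/- Let s ≥ 1 be an integer, let Δ ∈ (0, 1/6], let φ = min(2π/s, π/3), let a = 2Δ·(cos(π/s), sin(π/s)), let H^(1) = H(a, (1,0), φ, Δ), and for i = 1, …, s let H^(i) be the image of H^(1) under rotation about the origin by (i−1)·2π/s. Then the sets H^(1), …, H^(s) are pairwise disjoint. -/
open Real Set

/-- Rotation of `ℝ² = ℂ` about the origin by angle `θ` (counterclockwise). -/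
noncomputable def drot (θ : ℝ) (z : ℂ) : ℂ := Complex.exp ((θ : ℂ) * Complex.I) * z

/-!
Every point of `H⁽¹⁾` is `a` or `a + v` with `arg v ∈ [0, φ) ⊆ [0, 2π/s)`, while
`arg a = π/s`. For `s ≥ 2` the sector `{z | arg z ∈ (0, 2π/s)}` is the intersection of two open
half-planes through the origin, hence closed under such sums, so `H⁽¹⁾` lies in it. Rotating
this open sector by `(i-1)·2π/s` for `i = 1, …, s` gives pairwise disjoint sectors: equal
rotated points would have arguments differing by a nonzero multiple of `2π/s` modulo `2π`,
impossible for two angles in an interval of length `2π/s`.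
-/

namespace Complex

lemma im_mul_exp_ofReal_mul_I (z : ℂ) (t : ℝ) :
    (z * exp (t * I)).im = ‖z‖ * Real.sin (arg z + t) := by
  conv_lhs => rw [← norm_mul_exp_arg_mul_I z]
  rw [mul_assoc, ← exp_add, ← add_mul, ← ofReal_add, im_ofReal_mul, exp_ofReal_mul_I_im]

lemma im_nonneg_and_im_mul_exp_nonpos_of_arg_mem_Icc {z : ℂ} {θ : ℝ} (hθ : θ ≤ π)
    (hz : arg z ∈ Icc 0 θ) :
    0 ≤ z.im ∧ (z * exp ((-θ : ℝ) * I)).im ≤ 0 := by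
  refine ⟨arg_nonneg_iff.mp hz.1, ?_⟩
  rw [im_mul_exp_ofReal_mul_I]
  exact mul_nonpos_of_nonneg_of_nonpos (norm_nonneg z)
    (sin_nonpos_of_nonpos_of_neg_pi_le (by linarith [hz.2]) (by linarith [hz.1]))

lemma im_pos_and_im_mul_exp_neg_of_arg_mem_Ioo {z : ℂ} {θ : ℝ} (hθ : θ ≤ π)
    (hz : arg z ∈ Ioo 0 θ) :
    0 < z.im ∧ (z * exp ((-θ : ℝ) * I)).im < 0 := by
  have hz0 : z ≠ 0 := by rintro rfl; simp at hz
  have hargπ : arg z < π := hz.2.trans_le hθ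
  constructor
  · rw [← div_pos_iff_of_pos_right (norm_pos_iff.mpr hz0), ← sin_arg]
    exact sin_pos_of_pos_of_lt_pi hz.1 hargπ
  · rw [im_mul_exp_ofReal_mul_I]
    exact mul_neg_of_pos_of_neg (norm_pos_iff.mpr hz0)
      (sin_neg_of_neg_of_neg_pi_lt (by linarith [hz.2]) (by linarith [hz.1]))

lemma arg_mem_Ioo_of_im_pos_of_im_mul_exp_neg {z : ℂ} {θ : ℝ} (h0 : 0 ≤ θ) (hz : 0 < z.im)
    (hzθ : (z * exp ((-θ : ℝ) * I)).im < 0) : arg z ∈ Ioo 0 θ := by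
  have hargπ : arg z < π := arg_lt_pi_iff.mpr (Or.inr hz.ne')
  have harg0 : 0 < arg z :=
    (arg_nonneg_iff.mpr hz.le).lt_of_ne (fun h => hz.ne' (arg_eq_zero_iff.mp h.symm).2)
  refine ⟨harg0, lt_of_not_ge fun hθz => hzθ.not_ge ?_⟩
  rw [im_mul_exp_ofReal_mul_I]
  exact mul_nonneg (norm_nonneg z) (sin_nonneg_of_nonneg_of_le_pi (by linarith) (by linarith))

lemma arg_add_mem_Ioo {z w : ℂ} {θ : ℝ} (hθ : θ ≤ π) (hz : arg z ∈ Ico 0 θ)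
    (hw : arg w ∈ Ioo 0 θ) : arg (z + w) ∈ Ioo 0 θ := by
  obtain ⟨hz₁, hz₂⟩ :=
    im_nonneg_and_im_mul_exp_nonpos_of_arg_mem_Icc hθ (Ico_subset_Icc_self hz)
  obtain ⟨hw₁, hw₂⟩ := im_pos_and_im_mul_exp_neg_of_arg_mem_Ioo hθ hw
  refine arg_mem_Ioo_of_im_pos_of_im_mul_exp_neg (hw.1.le.trans hw.2.le) ?_ ?_
  · rw [add_im]; linarith
  · rw [add_mul, add_im]; linarith

lemma arg_mk_mul_cos_mul_sin {r θ : ℝ} (hr : 0 < r) (hθ : θ ∈ Ioc (-π) π) :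
    arg ⟨r * Real.cos θ, r * Real.sin θ⟩ = θ := by
  have h : (⟨r * Real.cos θ, r * Real.sin θ⟩ : ℂ) = r * (cos θ + sin θ * I) := by
    apply Complex.ext <;> simp [cos_ofReal_re, sin_ofReal_re]
  rw [h, arg_mul_cos_add_sin_mul_I hr hθ]

lemma arg_drot_coe_angle (θ : ℝ) {z : ℂ} (hz : z ≠ 0) :
    (arg (drot θ z) : Real.Angle) = θ + arg z := by
  rw [drot, arg_mul_coe_angle (exp_ne_zero _) hz, arg_exp]
  simp

end Complex

open Complex

lemma arg_mem_Ico_of_ccwAngle_one_mem {v : ℂ} {c : ℝ} (hc : c ≤ π)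
    (hv : ccwAngle 1 v ∈ Ico 0 c) : arg v ∈ Ico 0 c := by
  rw [ccwAngle, div_one, toCCW] at hv
  split_ifs at hv with h
  · exact hv
  · linarith [hv.2, neg_pi_lt_arg v]

lemma dhull_one_subset_sector {a : ℂ} {φ Δ θ : ℝ} (hθ : θ ≤ π) (hφ : φ ≤ θ)
    (ha : arg a ∈ Ioo 0 θ) : dhull a 1 φ Δ ⊆ {x | arg x ∈ Ioo 0 θ} := by
  rintro x (rfl | ⟨-, hx⟩)
  · exact ha
  · have hv : arg (x - a) ∈ Ico 0 θ :=
      Ico_subset_Ico_right hφ (arg_mem_Ico_of_ccwAngle_one_mem (hφ.trans hθ) hx)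
    simpa using arg_add_mem_Ioo hθ hv ha

lemma dvd_sub_of_drot_eq {s : ℕ} {m n : ℤ} {x y : ℂ} (hx : arg x ∈ Ioo 0 (2 * π / s))
    (hy : arg y ∈ Ioo 0 (2 * π / s))
    (h : drot (m * (2 * π / s)) x = drot (n * (2 * π / s)) y) : (s : ℤ) ∣ m - n := by
  set α := 2 * π / s with hα
  have hx0 : x ≠ 0 := by rintro rfl; simp at hx
  have hy0 : y ≠ 0 := by rintro rfl; simp at hy
  have hs : (s : ℝ) ≠ 0 := by rintro hs; simp [hα, hs] at hx
  have hαpos : 0 < α := hx.1.trans hx.2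
  have h2π : 2 * π = s * α := by rw [hα]; field_simp
  have hangle := congrArg (fun z => (arg z : Real.Angle)) h
  simp only [arg_drot_coe_angle _ hx0, arg_drot_coe_angle _ hy0, ← Real.Angle.coe_add,
    Real.Angle.angle_eq_iff_two_pi_dvd_sub] at hangle
  obtain ⟨k, hk⟩ := hangle
  refine ⟨k, ?_⟩
  have hN : (((m - n - s * k : ℤ) : ℝ)) * α = arg y - arg x := by
    push_cast; rw [h2π] at hk; linear_combination hk
  have hN1 : |(((m - n - s * k : ℤ) : ℝ))| < 1 := by
    have hlt : |((m - n - s * k : ℤ) : ℝ) * α| < α := by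
      rw [hN, abs_sub_lt_iff]
      constructor <;> linarith [hx.1, hx.2, hy.1, hy.2]
    rwa [abs_mul, abs_of_pos hαpos, mul_lt_iff_lt_one_left hαpos] at hlt
  have : m - n - s * k = 0 := Int.abs_lt_one_iff.mp (by exact_mod_cast hN1)
  linarith

theorem initial_hulls_disjoint_general (s : ℕ) (Δ : ℝ)
    (hΔ : Δ ∈ Set.Ioc (0 : ℝ) (1 / 6))
    (φ : ℝ) (hφ : φ = min (2 * π / s) (π / 3))
    (a : ℂ) (ha : a = (⟨2 * Δ * Real.cos (π / s), 2 * Δ * Real.sin (π / s)⟩ : ℂ)) :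
    ∀ i ∈ Finset.Icc 1 s, ∀ j ∈ Finset.Icc 1 s, i ≠ j →
      (drot (((i : ℝ) - 1) * (2 * π / s)) '' dhull a 1 φ Δ) ∩
        (drot (((j : ℝ) - 1) * (2 * π / s)) '' dhull a 1 φ Δ) = ∅ := by
  intro i hi j hj hij
  rw [Finset.mem_Icc] at hi hj
  have hs : (2 : ℝ) ≤ s := by norm_cast; omega
  have hπs : π / s ∈ Ioo 0 (2 * π / s) := ⟨by positivity, by gcongr; linarith [pi_pos]⟩
  have harg : arg a = π / s := by
    rw [ha]
    exact arg_mk_mul_cos_mul_sin (by linarith [hΔ.1])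
      ⟨by linarith [pi_pos, hπs.1], div_le_self pi_pos.le (by linarith)⟩
  have hsector : dhull a 1 φ Δ ⊆ {x | arg x ∈ Ioo 0 (2 * π / s)} :=
    dhull_one_subset_sector (div_le_of_le_mul₀ (by linarith) pi_pos.le (by nlinarith [pi_pos]))
      (hφ ▸ min_le_left _ _) (harg ▸ hπs)
  rw [eq_empty_iff_forall_notMem]
  rintro _ ⟨⟨x, hx, rfl⟩, y, hy, hxy⟩
  have hdvd := dvd_sub_of_drot_eq (m := i - 1) (n := j - 1) (hsector hx) (hsector hy)
    (by push_cast; exact hxy.symm)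
  have := Int.eq_zero_of_abs_lt_dvd hdvd (by rw [abs_lt]; omega)
  omega

/-- For `s ≥ 1`, `Δ ∈ (0, 1/6]`, `φ = min(2π/s, π/3)`,
`a = 2Δ·(cos(π/s), sin(π/s))`, `H^(1) = H(a, (1,0), φ, Δ)` and `H^(i)` the rotation of
`H^(1)` about the origin by `(i-1)·2π/s`, the sets `H^(1), …, H^(s)` are pairwise
disjoint. -/
theorem initial_hulls_disjoint (s : ℕ) (hs : 1 ≤ s) (Δ : ℝ)
    (hΔ : Δ ∈ Set.Ioc (0 : ℝ) (1 / 6))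
    (φ : ℝ) (hφ : φ = min (2 * π / s) (π / 3))
    (a : ℂ) (ha : a = (⟨2 * Δ * Real.cos (π / s), 2 * Δ * Real.sin (π / s)⟩ : ℂ)) :
    ∀ i ∈ Finset.Icc 1 s, ∀ j ∈ Finset.Icc 1 s, i ≠ j →
      (drot (((i : ℝ) - 1) * (2 * π / s)) '' dhull a 1 φ Δ) ∩
        (drot (((j : ℝ) - 1) * (2 * π / s)) '' dhull a 1 φ Δ) = ∅ :=
  initial_hulls_disjoint_general s Δ hΔ φ hφ a ha
end
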